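/- arXiv:2205.12801 — 2 statements merged into one kernel-verified Lean document; each statement's English description precedes it below -/
import Mathlib

section
/- Let (a_n)_{n≥1} be a sequence of integers, let x₀ ∈ ℝ, and define the forward orbit x_0 = x₀, x_{n+1} = (x_n)⁻¹ − a_{n+1} (viewing each a_n as a real number). Suppose that for every n ≥ 0 one has x_n ≠ 0 and |x_n| < 1. Then the sequence of convergents c_n = P[a_1,…,a_n]·(Q[a_1,…,a_n])⁻¹ tends to x₀ as n → ∞. -/
/-!
Write `P n / Q n` for the `n`-th convergent. The orbit relation `x n * (a (n + 1) + x (n + 1)) = 1`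
and the three-term recurrences of `P` and `Q` give `Q n * x₀ - P n = (-1) ^ n * x 0 ⋯ x n`.
As `P n` and `Q n` are integers and this error has absolute value in `(0, 1)`, `Q n ≠ 0`, so
`|Q n| ≥ 1` and `|P n / Q n - x₀| ≤ |x 0 ⋯ x n|`. This product tends to `0`: an integer digit
forces `|x (n + 1)| ≤ |x n|` or `|x n * x (n + 1)| ≤ 1 / 2`, and a positive limit of the product
would make `|x n| → 1`, hence eventually the first alternative, hence `|x n| ≤ |x N| < 1`.
-/

open Filter

/-- `(P l, Q l)` for a digit list `l = [a_i, …, a_n]`: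
`P [] = 0`, `Q [] = 1`, `P (a :: l) = Q l`, `Q (a :: l) = a * Q l + P l`. -/
def cfPQ {k : Type*} [DivisionRing k] : List k → k × k
  | [] => (0, 1)
  | a :: l => ((cfPQ l).2, a * (cfPQ l).2 + (cfPQ l).1)

/-- The digit list `[a_i, a_{i+1}, …, a_n]`. -/
def suffList {k : Type*} (a : ℕ → k) (i n : ℕ) : List k :=
  (List.range (n + 1 - i)).map (fun j => a (i + j))

open Finset Topology

section DivisionRing

variable {k : Type*} [DivisionRing k]

theorem cfPQ_append_pair (l : List k) (b c : k) :
    cfPQ (l ++ [b, c]) =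
      ((cfPQ l).1 + (cfPQ (l ++ [b])).1 * c, (cfPQ l).2 + (cfPQ (l ++ [b])).2 * c) := by
  induction l with
  | nil => simp [cfPQ, add_comm]
  | cons a l ih =>
    simp only [List.cons_append, cfPQ, ih, Prod.mk.injEq, true_and]
    noncomm_ring

theorem cfPQ_mem_subring (S : Subring k) {l : List k} (hl : ∀ b ∈ l, b ∈ S) :
    (cfPQ l).1 ∈ S ∧ (cfPQ l).2 ∈ S := by
  induction l with
  | nil => exact ⟨S.zero_mem, S.one_mem⟩
  | cons a l ih =>
    obtain ⟨hP, hQ⟩ := ih fun b hb => hl b (List.mem_cons_of_mem a hb)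
    exact ⟨hQ, S.add_mem (S.mul_mem (hl a List.mem_cons_self) hQ) hP⟩

theorem suffList_one_succ {α : Type*} (a : ℕ → α) (n : ℕ) :
    suffList a 1 (n + 1) = suffList a 1 n ++ [a (n + 1)] := by
  simp [suffList, List.range_succ, add_comm]

variable (a : ℕ → k)

theorem cfPQ_suffList_zero : cfPQ (suffList a 1 0) = (0, 1) := by
  simp [suffList, cfPQ]

theorem cfPQ_suffList_one : cfPQ (suffList a 1 1) = (1, a 1) := by
  simp [suffList, cfPQ]

theorem cfPQ_suffList_add_two (n : ℕ) :
    cfPQ (suffList a 1 (n + 2)) =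
      ((cfPQ (suffList a 1 n)).1 + (cfPQ (suffList a 1 (n + 1))).1 * a (n + 2),
        (cfPQ (suffList a 1 n)).2 + (cfPQ (suffList a 1 (n + 1))).2 * a (n + 2)) := by
  rw [suffList_one_succ, suffList_one_succ, List.append_assoc, List.singleton_append,
    cfPQ_append_pair]

end DivisionRing

section Orbit

variable {k : Type*} [Field k] {a x : ℕ → k}

theorem mul_digit_add_succ_eq_one (hstep : ∀ n, x (n + 1) = (x n)⁻¹ - a (n + 1))
    (hne : ∀ n, x n ≠ 0) (n : ℕ) : x n * (a (n + 1) + x (n + 1)) = 1 := by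
  rw [hstep, add_sub_cancel, mul_inv_cancel₀ (hne n)]

theorem cfPQ_suffList_error (hstep : ∀ n, x (n + 1) = (x n)⁻¹ - a (n + 1))
    (hne : ∀ n, x n ≠ 0) (n : ℕ) :
    (cfPQ (suffList a 1 n)).2 * x 0 - (cfPQ (suffList a 1 n)).1 =
      (-1) ^ n * ∏ i ∈ range (n + 1), x i := by
  set e := fun n => (cfPQ (suffList a 1 n)).2 * x 0 - (cfPQ (suffList a 1 n)).1
  have hx := mul_digit_add_succ_eq_one hstep hne
  have hratio : ∀ n, e (n + 1) = -x (n + 1) * e n := by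
    intro n
    induction n with
    | zero =>
      simp only [e, zero_add, cfPQ_suffList_zero, cfPQ_suffList_one]
      linear_combination hx 0
    | succ n ih =>
      have hrec : e (n + 2) = e n + e (n + 1) * a (n + 2) := by
        simp only [e, cfPQ_suffList_add_two]; ring
      rw [hrec, ih]
      linear_combination -e n * hx (n + 1)
  induction n with
  | zero => simp [cfPQ_suffList_zero]
  | succ n ih =>
    change e (n + 1) = _
    rw [hratio, show e n = _ from ih, prod_range_succ _ (n + 1)]
    ring

end Orbit

theorem abs_div_sub_le_of_abs_mul_sub_lt_one {p q : ℤ} {x : ℝ} (h0 : q * x - p ≠ 0)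
    (h1 : |q * x - p| < 1) : |p / q - x| ≤ |q * x - p| := by
  have hq : q ≠ 0 := by
    rintro rfl
    have : (0 : ℝ) < |(p : ℝ)| ∧ |(p : ℝ)| < 1 := by simpa using And.intro h0 h1
    rw [← Int.cast_abs] at this
    norm_cast at this
    omega
  have hq1 : (1 : ℝ) ≤ |(q : ℝ)| := by exact_mod_cast Int.one_le_abs hq
  have hq0 : (q : ℝ) ≠ 0 := by exact_mod_cast hq
  calc |p / q - x| = |q * x - p| / |(q : ℝ)| := by
        rw [← abs_div, ← abs_neg]; congr 1; field_simp; ring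
    _ ≤ |q * x - p| := div_le_self (abs_nonneg _) hq1

theorem abs_le_or_abs_mul_abs_le_half {u v : ℝ} (A : ℤ) (hu : |u| < 1) (hv : |v| < 1)
    (h : u * (A + v) = 1) : |v| ≤ |u| ∨ |u| * |v| ≤ 1 / 2 := by
  by_cases hu2 : |u| ≤ 1 / 2
  · right; nlinarith [abs_nonneg u, abs_nonneg v]
  have hA : |(A : ℝ) + v| * |u| = 1 := by rw [← abs_mul, mul_comm, h, abs_one]
  -- `|A + v| = 1 / |u| ∈ (1, 2)` leaves only `|A| ∈ {1, 2}`
  have hAv : |(A : ℝ) + v| < 2 := by nlinarith [abs_nonneg ((A : ℝ) + v)]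
  have hA3 : |(A : ℝ)| < 3 := by
    have := abs_sub ((A : ℝ) + v) v
    rw [add_sub_cancel_right] at this
    linarith
  have hA0 : A ≠ 0 := by
    rintro rfl
    rw [Int.cast_zero, zero_add] at hA
    nlinarith [abs_nonneg u]
  obtain ⟨hA3l, hA3r⟩ := abs_lt.mp hA3
  have hcases : A = -2 ∨ A = -1 ∨ A = 1 ∨ A = 2 := by
    have : -3 < A := by exact_mod_cast hA3l
    have : A < 3 := by exact_mod_cast hA3r
    omega
  rcases abs_cases u with ⟨hu', _⟩ | ⟨hu', _⟩ <;> rcases abs_cases v with ⟨hv', _⟩ | ⟨hv', _⟩ <;>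
    rw [hu', hv'] <;> rcases hcases with rfl | rfl | rfl | rfl <;> push_cast at h <;>
    first | (left; nlinarith) | (right; nlinarith)

theorem tendsto_prod_range_zero_of_le_or_mul_le_half {s : ℕ → ℝ} (hs0 : ∀ n, 0 ≤ s n)
    (hs1 : ∀ n, s n < 1) (h : ∀ n, s (n + 1) ≤ s n ∨ s n * s (n + 1) ≤ 1 / 2) :
    Tendsto (fun n => ∏ i ∈ range n, s i) atTop (𝓝 0) := by
  set π := fun n => ∏ i ∈ range n, s i
  have hπ0 : ∀ n, 0 ≤ π n := fun n => prod_nonneg fun i _ => hs0 i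
  have hanti : Antitone π := antitone_nat_of_succ_le fun n => by
    simpa [π, prod_range_succ] using mul_le_of_le_one_right (hπ0 n) (hs1 n).le
  have hbdd : BddBelow (Set.range π) := ⟨0, by rintro _ ⟨n, rfl⟩; exact hπ0 n⟩
  have hlim := tendsto_atTop_ciInf hanti hbdd
  obtain hL | hL := (le_ciInf hπ0).eq_or_lt
  · rwa [← hL] at hlim
  exfalso
  have hs_lim : Tendsto s atTop (𝓝 1) := by
    have hπpos : ∀ n, 0 < π n := fun n => hL.trans_le (ciInf_le hbdd n)
    have := (hlim.comp (tendsto_add_atTop_nat 1)).div hlim hL.ne'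
    rw [div_self hL.ne'] at this
    refine this.congr fun n => ?_
    simp [π, prod_range_succ, (hπpos n).ne']
  obtain ⟨N, hN⟩ :=
    eventually_atTop.mp (hs_lim.eventually (lt_mem_nhds (by norm_num : (3 / 4 : ℝ) < 1)))
  have hdec : ∀ n ≥ N, s n ≤ s N := by
    intro n hn
    induction n, hn using Nat.le_induction with
    | base => exact le_rfl
    | succ n hn ih =>
      refine ((h n).resolve_right ?_).trans ih
      nlinarith [hN n hn, hN (n + 1) (by omega)]
  exact (hs1 N).not_ge (le_of_tendsto hs_lim (eventually_atTop.mpr ⟨N, hdec⟩))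

theorem abs_cfPQ_suffList_intCast_sub_le {a : ℕ → ℤ} {x : ℕ → ℝ}
    (hstep : ∀ n, x (n + 1) = (x n)⁻¹ - (a (n + 1) : ℝ)) (hne : ∀ n, x n ≠ 0)
    (hlt : ∀ n, |x n| < 1) (n : ℕ) :
    |(cfPQ (suffList (fun i => (a i : ℝ)) 1 n)).1 *
      ((cfPQ (suffList (fun i => (a i : ℝ)) 1 n)).2)⁻¹ - x 0| ≤ ∏ i ∈ range (n + 1), |x i| := by
  obtain ⟨⟨p, hp⟩, ⟨q, hq⟩⟩ := cfPQ_mem_subring (Int.castRingHom ℝ).range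
    (l := suffList (fun i => (a i : ℝ)) 1 n) (by simp [suffList])
  simp only [eq_intCast] at hp hq
  have herr : |q * x 0 - p| = ∏ i ∈ range (n + 1), |x i| := by
    rw [hp, hq, cfPQ_suffList_error hstep hne, abs_mul, abs_pow, abs_neg, abs_one, one_pow,
      one_mul, abs_prod]
  have hprod_pos : 0 < ∏ i ∈ range (n + 1), |x i| :=
    prod_pos fun i _ => abs_pos.mpr (hne i)
  have hprod_lt : ∏ i ∈ range (n + 1), |x i| < 1 := by
    rw [prod_range_succ]
    exact mul_lt_one_of_nonneg_of_lt_one_right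
      (prod_le_one (fun i _ => abs_nonneg _) fun i _ => (hlt i).le) (abs_nonneg _) (hlt n)
  rw [← hp, ← hq, ← div_eq_mul_inv, ← herr]
  exact abs_div_sub_le_of_abs_mul_sub_lt_one (abs_pos.mp (herr ▸ hprod_pos)) (herr ▸ hprod_lt)

/-- Theorem 1.2 of the paper for `k = ℝ`, with integer digits. -/
theorem real_cf_convergence (a : ℕ → ℤ)
    (x₀ : ℝ) (x : ℕ → ℝ) (hx0 : x 0 = x₀)
    (hstep : ∀ n, x (n + 1) = (x n)⁻¹ - (a (n + 1) : ℝ))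
    (hne : ∀ n, x n ≠ 0) (hlt : ∀ n, |x n| < 1) :
    Tendsto
      (fun n => (cfPQ (suffList (fun i => (a i : ℝ)) 1 n)).1 *
        ((cfPQ (suffList (fun i => (a i : ℝ)) 1 n)).2)⁻¹)
      atTop (nhds x₀) := by
  subst hx0
  have hprod : Tendsto (fun n => ∏ i ∈ range n, |x i|) atTop (𝓝 0) :=
    tendsto_prod_range_zero_of_le_or_mul_le_half (fun n => abs_nonneg (x n)) hlt fun n =>
      abs_le_or_abs_mul_abs_le_half (a (n + 1)) (hlt n) (hlt (n + 1))
        (mul_digit_add_succ_eq_one (a := fun i => (a i : ℝ)) hstep hne n)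
  rw [tendsto_iff_norm_sub_tendsto_zero]
  exact squeeze_zero (fun n => norm_nonneg _) (abs_cfPQ_suffList_intCast_sub_le hstep hne hlt)
    (hprod.comp (tendsto_add_atTop_nat 1))
end

section
/- Let k be a normed division ring and Z a subring of k such that every nonzero element z ∈ Z satisfies ‖z‖ ≥ 1. Let n ≥ 1, a_1,…,a_n ∈ Z, and x₀ ∈ k with forward orbit x_0 = x₀, x_{i+1} = (x_i)⁻¹ − a_{i+1}; assume x_i ≠ 0 for 0 ≤ i ≤ n−1 and ‖x_i‖ < 1 for 0 ≤ i ≤ n. Then Q[a_i,…,a_n] ≠ 0 for every 1 ≤ i ≤ n, where Q is defined on suffixes by Q[] = 1, P[] = 0, P[a_i,…,a_n] = Q[a_{i+1},…,a_n], Q[a_i,…,a_n] = a_i·Q[a_{i+1},…,a_n] + P[a_{i+1},…,a_n]. -/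
/-!
Put `E(x, l) = x * Q l - P l`. If `x ≠ 0` and `x' = x⁻¹ - a`, then `E(x, a :: l) = -x * E(x', l)`,
so along an orbit in the open unit ball `E` is, up to sign, a product of orbit points and has
norm `< 1`. If moreover `Q (a :: l) = 0`, then `E(x, a :: l) = -P (a :: l) = -Q l`, an element of
`Z` of norm `< 1`, hence zero; downward induction from `Q [] = 1` rules this out.
-/

section ContinuedFraction

variable {k : Type*}

lemma cfPQ_mem [DivisionRing k] (Z : Subring k) :
    ∀ l : List k, (∀ b ∈ l, b ∈ Z) → (cfPQ l).1 ∈ Z ∧ (cfPQ l).2 ∈ Z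
  | [], _ => ⟨Z.zero_mem, Z.one_mem⟩
  | a :: l, h => by
    obtain ⟨hP, hQ⟩ := cfPQ_mem Z l fun b hb => h b (List.mem_cons_of_mem _ hb)
    exact ⟨hQ, Z.add_mem (Z.mul_mem (h a List.mem_cons_self) hQ) hP⟩

lemma mul_cfPQ_cons_sub [DivisionRing k] {x : k} (hx : x ≠ 0) (a : k) (l : List k) :
    x * (cfPQ (a :: l)).2 - (cfPQ (a :: l)).1 =
      -(x * ((x⁻¹ - a) * (cfPQ l).2 - (cfPQ l).1)) := by
  simp only [cfPQ, mul_add, ← mul_assoc, mul_sub, mul_inv_cancel₀ hx]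
  noncomm_ring

def OrbitInUnitBall [NormedDivisionRing k] : k → List k → Prop
  | x, [] => ‖x‖ < 1
  | x, a :: l => x ≠ 0 ∧ ‖x‖ < 1 ∧ OrbitInUnitBall (x⁻¹ - a) l

variable [NormedDivisionRing k]

lemma OrbitInUnitBall.norm_mul_cfPQ_sub_lt_one :
    ∀ {x : k} {l : List k}, OrbitInUnitBall x l → ‖x * (cfPQ l).2 - (cfPQ l).1‖ < 1
  | x, [], (h : ‖x‖ < 1) => by simpa [cfPQ] using h
  | x, a :: l, ⟨hx, hlt, h⟩ => by
    rw [mul_cfPQ_cons_sub hx, norm_neg, norm_mul]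
    exact mul_lt_one_of_nonneg_of_lt_one_left (norm_nonneg x) hlt
      (norm_mul_cfPQ_sub_lt_one h).le

lemma OrbitInUnitBall.cfPQ_snd_ne_zero {Z : Subring k} (hZ : ∀ z ∈ Z, z ≠ 0 → 1 ≤ ‖z‖) :
    ∀ {x : k} {l : List k}, (∀ b ∈ l, b ∈ Z) → OrbitInUnitBall x l → (cfPQ l).2 ≠ 0
  | _, [], _, _ => one_ne_zero
  | _, a :: l, hl, hx => by
    have hl' : ∀ b ∈ l, b ∈ Z := fun b hb => hl b (List.mem_cons_of_mem _ hb)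
    have hQ : (cfPQ l).2 ≠ 0 := cfPQ_snd_ne_zero hZ hl' hx.2.2
    intro hQ₀
    have hlt := hx.norm_mul_cfPQ_sub_lt_one
    rw [hQ₀, show (cfPQ (a :: l)).1 = (cfPQ l).2 from rfl, mul_zero, zero_sub, norm_neg] at hlt
    exact hlt.not_ge (hZ _ (cfPQ_mem Z l hl').2 hQ)

end ContinuedFraction

lemma suffList_of_le {k : Type*} (a : ℕ → k) {i n : ℕ} (h : i ≤ n) :
    suffList a i n = a i :: suffList a (i + 1) n := by
  rw [suffList, show n + 1 - i = n + 1 - (i + 1) + 1 by omega, List.range_succ_eq_map]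
  simp only [List.map_cons, List.map_map, suffList, add_zero]
  congr 2
  funext j
  simp only [Function.comp_apply]
  congr 1
  omega

lemma suffList_succ_self {k : Type*} (a : ℕ → k) (n : ℕ) : suffList a (n + 1) n = [] := by
  simp [suffList]

theorem cf_Q_nonzero_general {k : Type*} [NormedDivisionRing k]
    (Z : Subring k) (hZ : ∀ z ∈ Z, z ≠ 0 → 1 ≤ ‖z‖)
    (n : ℕ) (a : ℕ → k) (ha : ∀ i, 1 ≤ i → i ≤ n → a i ∈ Z)
    (x : ℕ → k)
    (hstep : ∀ i, x (i + 1) = (x i)⁻¹ - a (i + 1))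
    (hxne : ∀ i < n, x i ≠ 0) (hlt : ∀ i ≤ n, ‖x i‖ < 1) :
    ∀ i, 1 ≤ i → i ≤ n → (cfPQ (suffList a i n)).2 ≠ 0 := by
  have horbit : ∀ j ≤ n, OrbitInUnitBall (x j) (suffList a (j + 1) n) := by
    intro j hj
    induction hj using Nat.decreasingInduction with
    | self => rw [suffList_succ_self]; exact hlt n le_rfl
    | of_succ j hjn ih =>
      rw [suffList_of_le a hjn]
      exact ⟨hxne j hjn, hlt j hjn.le, hstep j ▸ ih⟩
  intro i hi hin
  obtain ⟨j, rfl⟩ : ∃ j, i = j + 1 := ⟨i - 1, by omega⟩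
  refine (horbit j (by omega)).cfPQ_snd_ne_zero hZ fun b hb => ?_
  obtain ⟨m, hm, rfl⟩ := List.mem_map.mp hb
  exact ha _ (by omega) (by simp only [List.mem_range] at hm; omega)

/-- Lemma 2.5 (Qnonzero) of the paper: the continued fraction denominators of
all suffixes are nonzero when the orbit stays in the open unit ball. -/
theorem cf_Q_nonzero {k : Type*} [NormedDivisionRing k]
    (Z : Subring k) (hZ : ∀ z ∈ Z, z ≠ 0 → 1 ≤ ‖z‖)
    (n : ℕ) (hn : 1 ≤ n) (a : ℕ → k) (ha : ∀ i, 1 ≤ i → i ≤ n → a i ∈ Z)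
    (x₀ : k) (x : ℕ → k) (hx0 : x 0 = x₀)
    (hstep : ∀ i, x (i + 1) = (x i)⁻¹ - a (i + 1))
    (hxne : ∀ i < n, x i ≠ 0) (hlt : ∀ i ≤ n, ‖x i‖ < 1) :
    ∀ i, 1 ≤ i → i ≤ n → (cfPQ (suffList a i n)).2 ≠ 0 :=
  cf_Q_nonzero_general Z hZ n a ha x hstep hxne hlt
end
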